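/- Modes of generation are not unique even for primitive generators: for pairwise distinct elements a, b, c, d of a set A, the word ā = abcbd is a primitive generator of the word c̄ = abcbcbd, and there exist two distinct surjective adjacent functions f, g : {1,…,7} → {1,…,5} such that ā^f = ā^g = c̄. -/

import Mathlib

/-!
The two modes turn back at the `c` and at the second `b` respectively. For primitivity, read a
generator of `abcbd` along the adjacent map `p`: consecutive letters differ, so `p` moves by
exactly one at each step, and `p 1 = p 3` would put `p 4` on `p 0` or `p 2`, which carry `a` and
`c`. Hence `p` visits five distinct positions.
-/

/-- A function `f : {1,…,m} → {1,…,k}` (0-indexed here) is adjacent if the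
indices of consecutive values differ by at most 1. -/
def Adjacent {m k : ℕ} (f : Fin m → Fin k) : Prop :=
  ∀ (i : ℕ) (h : i + 1 < m),
    |(((f ⟨i + 1, h⟩ : Fin k) : ℕ) : ℤ) - (((f ⟨i, Nat.lt_of_succ_lt h⟩ : Fin k) : ℕ) : ℤ)| ≤ 1

/-- A word `a` generates a word `c` if `c = a^f` for some surjective adjacent `f`. -/
def Generates {A : Type*} (a c : List A) : Prop :=
  ∃ f : Fin c.length → Fin a.length,
    Adjacent f ∧ Function.Surjective f ∧ c = List.ofFn (fun i => a.get (f i))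

/-- A word is primitive if it is not generated by any strictly shorter word. -/
def Primitive {A : Type*} (a : List A) : Prop :=
  ¬ ∃ b : List A, b.length < a.length ∧ Generates b a

/-- A primitive generator of `c` is a generator of `c` that is primitive. -/
def PrimitiveGenerator {A : Type*} (a c : List A) : Prop :=
  Primitive a ∧ Generates a c

theorem adjacent_iff {m k : ℕ} {f : Fin (m + 1) → Fin k} :
    Adjacent f ↔ ∀ i : Fin m, |((f i.succ : ℕ) : ℤ) - (f i.castSucc : ℕ)| ≤ 1 :=
  ⟨fun hf i => hf i (by omega), fun h i hi => h ⟨i, by omega⟩⟩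

theorem List.get_eq_get_of_eq_ofFn_of_apply_eq {A : Type*} {w c : List A}
    {f : Fin c.length → Fin w.length} (hc : c = List.ofFn fun i => w.get (f i))
    {i j : Fin c.length} (h : f i = f j) : c.get i = c.get j := by
  have hget : ∀ k : Fin c.length, c.get k = w.get (f k) := fun k => by
    simpa using List.getElem_of_eq hc k.2
  rw [hget, hget, h]

theorem injective_of_adjacent_of_abcbd {A : Type*} {a b c d : A}
    (hab : a ≠ b) (hac : a ≠ c) (had : a ≠ d) (hbc : b ≠ c) (hbd : b ≠ d) (hcd : c ≠ d)
    {n : ℕ} {p : Fin 5 → Fin n} (hp : Adjacent p)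
    (hw : ∀ i j : Fin 5, p i = p j → [a, b, c, b, d].get i = [a, b, c, b, d].get j) :
    Function.Injective p := by
  have s01 : |((p 1 : ℕ) : ℤ) - (p 0 : ℕ)| ≤ 1 := adjacent_iff.mp hp 0
  have s12 : |((p 2 : ℕ) : ℤ) - (p 1 : ℕ)| ≤ 1 := adjacent_iff.mp hp 1
  have s23 : |((p 3 : ℕ) : ℤ) - (p 2 : ℕ)| ≤ 1 := adjacent_iff.mp hp 2
  have s34 : |((p 4 : ℕ) : ℤ) - (p 3 : ℕ)| ≤ 1 := adjacent_iff.mp hp 3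
  have pos_ne : ∀ i j : Fin 5, [a, b, c, b, d].get i ≠ [a, b, c, b, d].get j → (p i : ℕ) ≠ p j :=
    fun i j hij h => hij (hw i j (Fin.ext h))
  have n01 := pos_ne 0 1 hab
  have n02 := pos_ne 0 2 hac
  have n04 := pos_ne 0 4 had
  have n12 := pos_ne 1 2 hbc
  have n23 := pos_ne 2 3 hbc.symm
  have n24 := pos_ne 2 4 hcd
  have n34 := pos_ne 3 4 hbd
  have n03 := pos_ne 0 3 hab
  have n14 := pos_ne 1 4 hbd
  have n13 : (p 1 : ℕ) ≠ p 3 := by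
    rw [abs_le] at s01 s12 s23 s34
    omega
  intro i j h
  have h' := congrArg Fin.val h
  fin_cases i <;> fin_cases j <;> first
    | rfl
    | (simp only [Fin.zero_eta, Fin.mk_one, Fin.reduceFinMk] at h'; omega)

theorem primitive_abcbd {A : Type*} {a b c d : A}
    (hab : a ≠ b) (hac : a ≠ c) (had : a ≠ d) (hbc : b ≠ c) (hbd : b ≠ d) (hcd : c ≠ d) :
    Primitive [a, b, c, b, d] := by
  rintro ⟨w, hlen, f, hf, -, hc⟩
  have hinj : Function.Injective f := injective_of_adjacent_of_abcbd hab hac had hbc hbd hcd hf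
    fun i j => List.get_eq_get_of_eq_ofFn_of_apply_eq hc
  have hcard := Fintype.card_le_of_injective f hinj
  rw [Fintype.card_fin, Fintype.card_fin] at hcard
  exact hcard.not_gt hlen

/-- Modes of generation are not unique: `abcbd` is a primitive generator of
`abcbcbd`, via two distinct surjective adjacent functions. -/
theorem modes_of_generation_not_unique {A : Type*} (a b c d : A)
    (hab : a ≠ b) (hac : a ≠ c) (had : a ≠ d)
    (hbc : b ≠ c) (hbd : b ≠ d) (hcd : c ≠ d) :
    PrimitiveGenerator [a, b, c, b, d] [a, b, c, b, c, b, d] ∧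
    ∃ f g : Fin 7 → Fin 5, f ≠ g ∧
      (Adjacent f ∧ Function.Surjective f ∧
        ([a, b, c, b, c, b, d] : List A) =
          List.ofFn (fun i => [a, b, c, b, d].get (f i))) ∧
      (Adjacent g ∧ Function.Surjective g ∧
        ([a, b, c, b, c, b, d] : List A) =
          List.ofFn (fun i => [a, b, c, b, d].get (g i))) := by
  have hf : Adjacent (![0, 1, 2, 1, 2, 3, 4] : Fin 7 → Fin 5) ∧
      Function.Surjective (![0, 1, 2, 1, 2, 3, 4] : Fin 7 → Fin 5) ∧
      [a, b, c, b, c, b, d] = List.ofFn fun i => [a, b, c, b, d].get (![0, 1, 2, 1, 2, 3, 4] i) :=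
    ⟨adjacent_iff.mpr (by decide), by decide, by simp [List.ofFn_succ]⟩
  have hg : Adjacent (![0, 1, 2, 3, 2, 3, 4] : Fin 7 → Fin 5) ∧
      Function.Surjective (![0, 1, 2, 3, 2, 3, 4] : Fin 7 → Fin 5) ∧
      [a, b, c, b, c, b, d] = List.ofFn fun i => [a, b, c, b, d].get (![0, 1, 2, 3, 2, 3, 4] i) :=
    ⟨adjacent_iff.mpr (by decide), by decide, by simp [List.ofFn_succ]⟩
  exact ⟨⟨primitive_abcbd hab hac had hbc hbd hcd, _, hf⟩, _, _, by decide, hf, hg⟩
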